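/- arXiv:1808.05609 — 2 statements merged into one kernel-verified Lean document; each statement's English description precedes it below -/
import Mathlib

section
/- Let (S_n)_{n∈ℕ} be a sequence of measure expanding subsets of ℤ. Then there is a sequence of finite sets S'_n ⊆ S_n such that the union S' := ⋃_{n=1}^∞ S'_n is measure expanding. -/
/-- A measure preserving system: a probability space `(X, μ)` together with an
invertible measure preserving transformation `T : X → X`. -/
structure MPSystem where
  X : Type
  [mX : MeasurableSpace X]
  μ : MeasureTheory.Measure X
  prob : MeasureTheory.IsProbabilityMeasure μ
  T : X ≃ᵐ X
  mp : MeasureTheory.MeasurePreserving T μ μ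

attribute [instance] MPSystem.mX

open MeasureTheory Filter

namespace MPSystem

/-- The `n`-th iterate `Tⁿ` of the transformation, for `n : ℤ`. -/
def iter (𝒮 : MPSystem) (n : ℤ) : 𝒮.X → 𝒮.X :=
  fun x => ((𝒮.T.toEquiv : Equiv.Perm 𝒮.X) ^ n) x

/-- The system is ergodic: every measurable `D` with `μ(D △ T⁻¹D) = 0` has measure `0` or `1`. -/
def IsErgodic (𝒮 : MPSystem) : Prop :=
  ∀ D : Set 𝒮.X, MeasurableSet D → 𝒮.μ (symmDiff D (𝒮.T ⁻¹' D)) = 0 →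
    𝒮.μ D = 0 ∨ 𝒮.μ D = 1

/-- The product system `(X × X, μ × μ, T × T)`. -/
noncomputable def prod (𝒮 : MPSystem) : MPSystem where
  X := 𝒮.X × 𝒮.X
  μ := 𝒮.μ.prod 𝒮.μ
  prob := by have := 𝒮.prob; infer_instance
  T := 𝒮.T.prodCongr 𝒮.T
  mp := by have := 𝒮.prob; exact 𝒮.mp.prod 𝒮.mp

/-- The system is weak mixing: the product system `(X×X, μ×μ, T×T)` is ergodic. -/
def WeakMixing (𝒮 : MPSystem) : Prop := 𝒮.prod.IsErgodic

/-- The system is nontrivial: some measurable `D` has `μ(D △ T⁻¹D) > 0`. -/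
def Nontrivial (𝒮 : MPSystem) : Prop :=
  ∃ D : Set 𝒮.X, MeasurableSet D ∧ 0 < 𝒮.μ (symmDiff D (𝒮.T ⁻¹' D))

end MPSystem

/-- `S ⊆ ℤ` is a set of recurrence: for every measure preserving system and every
measurable `D` with `μ(D) > 0`, there is `n ∈ S` with `μ(D ∩ TⁿD) > 0`. -/
def IsRecurrenceSet (S : Set ℤ) : Prop :=
  ∀ (𝒮 : MPSystem) (D : Set 𝒮.X), MeasurableSet D → 0 < 𝒮.μ D →
    ∃ n ∈ S, 0 < 𝒮.μ (D ∩ 𝒮.iter n '' D)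

/-- `S ⊆ ℤ` is measure expanding: every translate `S + m` is a set of recurrence. -/
def MeasureExpanding (S : Set ℤ) : Prop :=
  ∀ m : ℤ, IsRecurrenceSet ((fun s => s + m) '' S)

/-- `S` is a set of `δ`-recurrence: for every measure preserving system and every
measurable `D` with `μ(D) > δ`, there is `n ∈ S` with `μ(D ∩ TⁿD) > 0`. -/
def IsDeltaRecurrenceSet (δ : ℝ) (S : Set ℤ) : Prop :=
  ∀ (𝒮 : MPSystem) (D : Set 𝒮.X), MeasurableSet D → ENNReal.ofReal δ < 𝒮.μ D →
    ∃ n ∈ S, 0 < 𝒮.μ (D ∩ 𝒮.iter n '' D)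

/-- `S` (an infinite set) is a set of rigidity for the system `𝒮`:
for every measurable `D` and every `ε > 0`, `{n ∈ S : μ(D △ TⁿD) > ε}` is finite. -/
def IsRigiditySetFor (S : Set ℤ) (𝒮 : MPSystem) : Prop :=
  S.Infinite ∧ ∀ D : Set 𝒮.X, MeasurableSet D → ∀ ε : ℝ, 0 < ε →
    {n ∈ S | ENNReal.ofReal ε < 𝒮.μ (symmDiff D (𝒮.iter n '' D))}.Finite

/-- `S` is a set of strong recurrence. -/
def IsStrongRecurrenceSet (S : Set ℤ) : Prop :=
  ∀ (𝒮 : MPSystem) (D : Set 𝒮.X), MeasurableSet D → 0 < 𝒮.μ D →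
    ∃ c : ℝ, 0 < c ∧ {n ∈ S | ENNReal.ofReal c < 𝒮.μ (D ∩ 𝒮.iter n '' D)}.Infinite

/-- `S` is a set of strong recurrence for weak mixing systems. -/
def IsStrongRecurrenceSetForWeakMixing (S : Set ℤ) : Prop :=
  ∀ (𝒮 : MPSystem), 𝒮.WeakMixing → ∀ (D : Set 𝒮.X), MeasurableSet D → 0 < 𝒮.μ D →
    ∃ c : ℝ, 0 < c ∧ {n ∈ S | ENNReal.ofReal c < 𝒮.μ (D ∩ 𝒮.iter n '' D)}.Infinite

/-- The circle group `𝕋 = ℝ/ℤ`. -/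
abbrev 𝕋 : Type := UnitAddCircle

/-- The character `e : 𝕋 → S¹ ⊆ ℂ`, `e(x) = exp(2πi x̃)` where `x̃` is a real
representative of `x`. -/
noncomputable def e (x : 𝕋) : ℂ := (AddCircle.toCircle x : ℂ)

/-- A tuple `α ∈ 𝕋^d` is independent if the only integer solution of
`n₁α₁ + ⋯ + n_dα_d = 0` is `n₁ = ⋯ = n_d = 0`. -/
def IndepTuple {d : ℕ} (α : Fin d → 𝕋) : Prop :=
  ∀ n : Fin d → ℤ, (∑ j, n j • α j) = 0 → ∀ j, n j = 0

/-- The Bohr set `Bohr(α, η) = {n ∈ ℤ : max_j ‖nαⱼ‖ < η}`. -/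
def BohrSet {d : ℕ} (α : Fin d → 𝕋) (η : ℝ) : Set ℤ :=
  {n : ℤ | ∀ j, ‖n • α j‖ < η}

/-- The Bohr–Hamming neighborhood `BH(α; ε, η) = {n ∈ ℤ : #{j : ‖nαⱼ‖ < ε} ≥ (1-η)d}`. -/
def BHNbhd {d : ℕ} (α : Fin d → 𝕋) (ε η : ℝ) : Set ℤ :=
  {n : ℤ | (1 - η) * d ≤ ({j : Fin d | ‖n • α j‖ < ε}.ncard : ℝ)}

/-- The upper Banach density of `A ⊆ ℤ`:
`d*(A) = lim_k sup_n |A ∩ {n+1,…,n+k}|/k` (realized as a `limsup`). -/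
noncomputable def upperBanachDensity (A : Set ℤ) : ℝ :=
  Filter.limsup
    (fun k : ℕ => ⨆ n : ℤ, ((A ∩ Set.Icc (n + 1) (n + k)).ncard : ℝ) / k) Filter.atTop

/-!
If no finite `F ⊆ R` were `δ`-recurrent, there would be systems `𝒮ₖ` and sets `Dₖ` with
`μ Dₖ > δ` that never return to themselves at times in `R ∩ [-k, k]`. Coding orbits by their
itineraries through `Dₖ` turns these into shift-invariant measures on `{0,1}^ℤ`, and a weak-*
limit point of them is a system in which the cylinder `{ω | ω 0}` has measure at least `δ` but
never returns to itself at times in `R`: so every set of recurrence has `δ`-recurrent finite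
subsets. Letting `S'ₖ ⊆ Sₖ` be such a subset for the translate by `m` and `δ = 1/(j+1)`, where
`k ↦ (m, j)` enumerates `ℤ × ℕ`, every translate of `⋃ₖ S'ₖ` is a set of recurrence.
-/

open MeasureTheory Filter Set Topology
open scoped ENNReal

lemma Equiv.Perm.measurePreserving_zpow {X : Type*} [MeasurableSpace X] {μ : Measure X}
    {σ : Equiv.Perm X} (hσ : MeasurePreserving σ μ μ) (hσ_symm : MeasurePreserving σ.symm μ μ)
    (n : ℤ) : MeasurePreserving ⇑(σ ^ n) μ μ := by
  induction n using Int.induction_on with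
  | zero => exact MeasurePreserving.id μ
  | succ k ih => rw [zpow_add_one, Equiv.Perm.coe_mul]; exact ih.comp hσ
  | pred k ih => rw [zpow_sub_one, Equiv.Perm.coe_mul]; exact ih.comp hσ_symm

def shift : (ℤ → Bool) ≃ᵐ (ℤ → Bool) where
  toFun ω n := ω (n + 1)
  invFun ω n := ω (n - 1)
  left_inv ω := by simp
  right_inv ω := by simp
  measurable_toFun := measurable_pi_lambda _ fun n => measurable_pi_apply (n + 1)
  measurable_invFun := measurable_pi_lambda _ fun n => measurable_pi_apply (n - 1)

lemma continuous_shift : Continuous shift :=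
  continuous_pi fun n => continuous_apply (n + 1)

lemma shift_zpow_apply (m : ℤ) (ω : ℤ → Bool) (n : ℤ) :
    ((shift.toEquiv : Equiv.Perm (ℤ → Bool)) ^ m) ω n = ω (n + m) := by
  induction m using Int.induction_on generalizing ω n with
  | zero => simp
  | succ k ih => rw [zpow_add_one, Equiv.Perm.mul_apply, ih, ← add_assoc]; rfl
  | pred k ih => rw [zpow_sub_one, Equiv.Perm.mul_apply, ih, add_sub_assoc']; rfl

lemma isClopen_setOf_apply_eq_true (n : ℤ) : IsClopen {ω : ℤ → Bool | ω n = true} :=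
  (isClopen_discrete {true}).preimage (continuous_apply n)

lemma shift_zpow_image_setOf_apply_zero (n : ℤ) :
    ⇑((shift.toEquiv : Equiv.Perm (ℤ → Bool)) ^ n) '' {ω | ω 0 = true} = {ω | ω (-n) = true} := by
  rw [Equiv.image_eq_preimage_symm, ← Equiv.Perm.inv_def, ← zpow_neg]
  ext ω
  simp only [mem_preimage, mem_ofPred_eq, shift_zpow_apply, zero_add]

namespace MPSystem

variable (𝒮 : MPSystem)

lemma iter_eq_coe_zpow (n : ℤ) : 𝒮.iter n = ⇑((𝒮.T.toEquiv : Equiv.Perm 𝒮.X) ^ n) := rfl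

lemma measurePreserving_iter (n : ℤ) : MeasurePreserving (𝒮.iter n) 𝒮.μ 𝒮.μ :=
  Equiv.Perm.measurePreserving_zpow 𝒮.mp (MeasurePreserving.symm 𝒮.T 𝒮.mp) n

lemma image_iter (n : ℤ) (D : Set 𝒮.X) : 𝒮.iter n '' D = 𝒮.iter (-n) ⁻¹' D := by
  rw [iter_eq_coe_zpow, iter_eq_coe_zpow, Equiv.image_eq_preimage_symm, ← Equiv.Perm.inv_def,
    ← zpow_neg]

lemma iter_zero : 𝒮.iter 0 = id := by
  funext x; simp [iter]

lemma iter_comp_T (n : ℤ) : 𝒮.iter n ∘ 𝒮.T = 𝒮.iter (n + 1) := by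
  funext x; simp [iter, zpow_add_one]

noncomputable def itinerary (D : Set 𝒮.X) (x : 𝒮.X) : ℤ → Bool :=
  fun n => D.boolIndicator (𝒮.iter n x)

variable {𝒮} {D : Set 𝒮.X}

lemma measurable_itinerary (hD : MeasurableSet D) : Measurable (𝒮.itinerary D) :=
  measurable_pi_lambda _ fun n =>
    (measurable_to_bool (by rwa [preimage_boolIndicator_true])).comp
      (𝒮.measurePreserving_iter n).measurable

lemma preimage_itinerary (n : ℤ) :
    𝒮.itinerary D ⁻¹' {ω | ω n = true} = 𝒮.iter n ⁻¹' D := by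
  ext x
  exact (mem_iff_boolIndicator _ _).symm

noncomputable def itineraryLaw (hD : MeasurableSet D) : ProbabilityMeasure (ℤ → Bool) :=
  ⟨𝒮.μ.map (𝒮.itinerary D),
    haveI := 𝒮.prob; Measure.isProbabilityMeasure_map (measurable_itinerary hD).aemeasurable⟩

lemma itineraryLaw_apply (hD : MeasurableSet D) {E : Set (ℤ → Bool)} (hE : MeasurableSet E) :
    (𝒮.itineraryLaw hD : Measure (ℤ → Bool)) E = 𝒮.μ (𝒮.itinerary D ⁻¹' E) :=
  Measure.map_apply (measurable_itinerary hD) hE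

lemma itineraryLaw_setOf_apply_zero (hD : MeasurableSet D) :
    (𝒮.itineraryLaw hD : Measure (ℤ → Bool)) {ω | ω 0 = true} = 𝒮.μ D := by
  rw [itineraryLaw_apply hD (isClopen_setOf_apply_eq_true 0).isOpen.measurableSet,
    preimage_itinerary, iter_zero, preimage_id]

lemma itineraryLaw_setOf_apply_zero_inter (hD : MeasurableSet D) (n : ℤ) :
    (𝒮.itineraryLaw hD : Measure (ℤ → Bool)) ({ω | ω 0 = true} ∩ {ω | ω (-n) = true}) =
      𝒮.μ (D ∩ 𝒮.iter n '' D) := by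
  rw [itineraryLaw_apply hD ((isClopen_setOf_apply_eq_true 0).isOpen.measurableSet.inter
      (isClopen_setOf_apply_eq_true (-n)).isOpen.measurableSet),
    preimage_inter, preimage_itinerary, preimage_itinerary, iter_zero, preimage_id, ← image_iter]

lemma shift_comp_itinerary :
    shift ∘ 𝒮.itinerary D = 𝒮.itinerary D ∘ 𝒮.T := by
  funext x n
  exact congrArg D.boolIndicator (congrFun (𝒮.iter_comp_T n) x).symm

lemma map_shift_itineraryLaw (hD : MeasurableSet D) :
    (𝒮.itineraryLaw hD : Measure (ℤ → Bool)).map shift = 𝒮.itineraryLaw hD := by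
  have hmeas := measurable_itinerary hD
  change (𝒮.μ.map _).map shift = 𝒮.μ.map _
  rw [Measure.map_map shift.measurable hmeas, shift_comp_itinerary,
    ← Measure.map_map hmeas 𝒮.T.measurable, 𝒮.mp.map_eq]

end MPSystem

noncomputable def shiftSystem (ν : ProbabilityMeasure (ℤ → Bool))
    (hν : (ν : Measure (ℤ → Bool)).map shift = ν) : MPSystem where
  X := ℤ → Bool
  μ := ν
  prob := inferInstance
  T := shift
  mp := ⟨shift.measurable, hν⟩

lemma exists_tendsto_map_shift_eq {ι : Type*} (𝒰 : Ultrafilter ι)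
    (νs : ι → ProbabilityMeasure (ℤ → Bool))
    (hνs : ∀ i, (νs i : Measure (ℤ → Bool)).map shift = νs i) :
    ∃ ν : ProbabilityMeasure (ℤ → Bool),
      (ν : Measure (ℤ → Bool)).map shift = ν ∧ Tendsto νs 𝒰 (𝓝 ν) := by
  obtain ⟨ν, -, hν⟩ := isCompact_univ.ultrafilter_le_nhds (𝒰.map νs) (by simp)
  have hlim : Tendsto νs 𝒰 (𝓝 ν) := hν
  have hmap : Tendsto νs 𝒰 (𝓝 (ν.map continuous_shift.measurable.aemeasurable)) := by
    exact (((ProbabilityMeasure.continuous_map continuous_shift).tendsto ν).comp hlim).congr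
      fun i => Subtype.ext (hνs i)
  exact ⟨ν, congrArg Subtype.val (tendsto_nhds_unique (X := ProbabilityMeasure _) hmap hlim), hlim⟩

/-- `Ξ` is the shift with a weak-* limit point of the laws of the itineraries of the `D k`, and
`C` is the cylinder `{ω | ω 0}`. -/
lemma exists_limit_mpSystem (𝒮 : ℕ → MPSystem) (D : ∀ k, Set (𝒮 k).X)
    (hD : ∀ k, MeasurableSet (D k)) {c : ℝ≥0∞} (hc : ∀ k, c ≤ (𝒮 k).μ (D k)) :
    ∃ (Ξ : MPSystem) (C : Set Ξ.X), MeasurableSet C ∧ c ≤ Ξ.μ C ∧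
      ∀ n : ℤ, (∀ᶠ k in atTop, (𝒮 k).μ (D k ∩ (𝒮 k).iter n '' D k) = 0) →
        Ξ.μ (C ∩ Ξ.iter n '' C) = 0 := by
  let νs k := (𝒮 k).itineraryLaw (hD k)
  obtain ⟨𝒰, h𝒰⟩ := Ultrafilter.exists_le (atTop : Filter ℕ)
  obtain ⟨ν, hν, hlim⟩ :=
    exists_tendsto_map_shift_eq 𝒰 νs fun k => MPSystem.map_shift_itineraryLaw (hD k)
  have htendsto {E : Set (ℤ → Bool)} (hE : IsClopen E) :
      Tendsto (fun k => (νs k : Measure (ℤ → Bool)) E) 𝒰 (𝓝 ((ν : Measure (ℤ → Bool)) E)) :=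
    ProbabilityMeasure.tendsto_measure_of_null_frontier_of_tendsto' hlim (by simp [hE.frontier_eq])
  refine ⟨shiftSystem ν hν, ({ω : ℤ → Bool | ω 0 = true} : Set (ℤ → Bool)),
    (isClopen_setOf_apply_eq_true 0).isOpen.measurableSet, ?_, fun n hn => ?_⟩
  · change c ≤ (ν : Measure (ℤ → Bool)) {ω | ω 0 = true}
    exact ge_of_tendsto' (htendsto (isClopen_setOf_apply_eq_true 0)) fun k =>
      (hc k).trans_eq (MPSystem.itineraryLaw_setOf_apply_zero (hD k)).symm
  · change (ν : Measure (ℤ → Bool))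
      ({ω | ω 0 = true} ∩ ⇑((shift.toEquiv : Equiv.Perm (ℤ → Bool)) ^ n) '' {ω | ω 0 = true}) = 0
    rw [shift_zpow_image_setOf_apply_zero]
    have hclopen := (isClopen_setOf_apply_eq_true 0).inter (isClopen_setOf_apply_eq_true (-n))
    refine tendsto_nhds_unique (htendsto hclopen) (tendsto_const_nhds.congr' ?_)
    filter_upwards [h𝒰 hn] with k hk
    rw [MPSystem.itineraryLaw_setOf_apply_zero_inter (hD k), hk]

theorem IsRecurrenceSet.exists_finite_isDeltaRecurrenceSet {R : Set ℤ} (hR : IsRecurrenceSet R)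
    {δ : ℝ} (hδ : 0 < δ) : ∃ F ⊆ R, F.Finite ∧ IsDeltaRecurrenceSet δ F := by
  by_contra! hnot
  have hwitness (k : ℕ) : ∃ (𝒮 : MPSystem) (D : Set 𝒮.X), MeasurableSet D ∧
      ENNReal.ofReal δ ≤ 𝒮.μ D ∧ ∀ n ∈ R, n.natAbs ≤ k → 𝒮.μ (D ∩ 𝒮.iter n '' D) = 0 := by
    have := hnot (R ∩ Icc (-k) k) inter_subset_left ((finite_Icc _ _).inter_of_right _)
    rw [IsDeltaRecurrenceSet] at this
    push Not at this
    obtain ⟨𝒮, D, hD, hδD, hD0⟩ := this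
    exact ⟨𝒮, D, hD, hδD.le, fun n hn hnk =>
      nonpos_iff_eq_zero.1 (hD0 n ⟨hn, by rw [mem_Icc]; omega⟩)⟩
  choose 𝒮 D hD hδD hD0 using hwitness
  obtain ⟨Ξ, C, hC, hδC, hC0⟩ := exists_limit_mpSystem 𝒮 D hD hδD
  obtain ⟨n, hnR, hn⟩ := hR Ξ C hC ((ENNReal.ofReal_pos.2 hδ).trans_le hδC)
  exact hn.ne' (hC0 n (eventually_atTop.2 ⟨n.natAbs, fun k hk => hD0 k n hnR hk⟩))

lemma MeasureExpanding.exists_finite_isDeltaRecurrenceSet {S : Set ℤ} (hS : MeasureExpanding S)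
    (m : ℤ) {δ : ℝ} (hδ : 0 < δ) :
    ∃ F ⊆ S, F.Finite ∧ IsDeltaRecurrenceSet δ ((fun s => s + m) '' F) := by
  obtain ⟨F, hFS, hFfin, hF⟩ := (hS m).exists_finite_isDeltaRecurrenceSet hδ
  refine ⟨S ∩ (fun s => s + m) ⁻¹' F, inter_subset_left,
    (hFfin.preimage (add_left_injective m).injOn).subset inter_subset_right, ?_⟩
  rwa [image_inter_preimage, inter_eq_right.2 hFS]

lemma ENNReal.exists_ofReal_inv_succ_lt {a : ℝ≥0∞} (ha : 0 < a) :
    ∃ j : ℕ, ENNReal.ofReal ((j : ℝ) + 1)⁻¹ < a := by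
  obtain ⟨j, hj⟩ := ENNReal.exists_inv_nat_lt ha.ne'
  refine ⟨j, lt_of_le_of_lt ?_ hj⟩
  rw [ENNReal.ofReal_inv_of_pos (by positivity), ← ENNReal.ofReal_natCast]
  exact ENNReal.inv_le_inv.2 (ENNReal.ofReal_le_ofReal (by linarith))

/-- **Lemma.** Given a sequence of measure expanding sets `Sₙ ⊆ ℤ`, there are finite sets
`S'ₙ ⊆ Sₙ` whose union is measure expanding. -/
theorem exists_finite_selection_measureExpanding
    (Sseq : ℕ → Set ℤ) (h : ∀ n, MeasureExpanding (Sseq n)) :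
    ∃ S' : ℕ → Set ℤ, (∀ n, S' n ⊆ Sseq n ∧ (S' n).Finite) ∧
      MeasureExpanding (⋃ n, S' n) := by
  let e := Denumerable.eqv (ℤ × ℕ)
  have hselect (k : ℕ) : ∃ F ⊆ Sseq k, F.Finite ∧
      IsDeltaRecurrenceSet ((e.symm k).2 + 1 : ℝ)⁻¹ ((fun s => s + (e.symm k).1) '' F) :=
    (h k).exists_finite_isDeltaRecurrenceSet _ (by positivity)
  choose S' hS'S hS'fin hS'rec using hselect
  refine ⟨S', fun k => ⟨hS'S k, hS'fin k⟩, fun m 𝒮 D hD hpos => ?_⟩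
  obtain ⟨j, hj⟩ := ENNReal.exists_ofReal_inv_succ_lt hpos
  have hrec := hS'rec (e (m, j))
  rw [Equiv.symm_apply_apply] at hrec
  obtain ⟨_, ⟨s, hs, rfl⟩, hreturn⟩ := hrec 𝒮 D hD hj
  exact ⟨s + m, ⟨s, mem_iUnion.2 ⟨_, hs⟩, rfl⟩, hreturn⟩
end

section
/- Let δ > 0. If S ⊆ ℤ is measure expanding, E ⊆ ℤ is a set of δ-recurrence, and (X,μ,T) is a measure preserving system with a measurable set D ⊆ X having μ(D) > 0, then S ∩ (E + R₀(T;D)) is a set of δ-recurrence, where E + R₀(T;D) := {e + r : e ∈ E, r ∈ R₀(T;D)}. -/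
open MeasureTheory Filter

/-- The set of return times `R_c(T;D) = {n ∈ ℤ : μ(D ∩ TⁿD) > c}`. -/
def returnTimes (𝒮 : MPSystem) (D : Set 𝒮.X) (c : ℝ) : Set ℤ :=
  {n : ℤ | ENNReal.ofReal c < 𝒮.μ (D ∩ 𝒮.iter n '' D)}

/-!
Pick `e ∈ E` with `μ(A ∩ TᵉA) > 0` and put `A' := A ∩ TᵉA`. Applying recurrence of the translate
`S - e` to the set `D × A'` in the product of the two systems gives `s ∈ S` such that `s - e`
is a return time of both `D` and `A'`. Since `Tˢ⁻ᵉA' ⊆ TˢA`, `s` is then a return time of `A`,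
and `s = e + (s - e) ∈ E + R₀(T;D)`.
-/

namespace Equiv.Perm

variable {α β : Type*}

def prodCongrHom : Perm α × Perm β →* Perm (α × β) where
  toFun p := p.1.prodCongr p.2
  map_one' := rfl
  map_mul' _ _ := rfl

lemma prodCongr_zpow (a : Perm α) (b : Perm β) (n : ℤ) :
    a.prodCongr b ^ n = (a ^ n).prodCongr (b ^ n) :=
  (map_zpow prodCongrHom (a, b) n).symm

end Equiv.Perm

namespace MPSystem

-- Reducible, so that its carrier is syntactically `𝒮.X × 𝒯.X` for rewriting with product lemmas.
noncomputable abbrev prodWith (𝒮 𝒯 : MPSystem) : MPSystem where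
  X := 𝒮.X × 𝒯.X
  μ := 𝒮.μ.prod 𝒯.μ
  prob := by have := 𝒮.prob; have := 𝒯.prob; infer_instance
  T := 𝒮.T.prodCongr 𝒯.T
  mp := by have := 𝒮.prob; have := 𝒯.prob; exact 𝒮.mp.prod 𝒯.mp

variable (𝒮 𝒯 : MPSystem)

lemma iter_prodWith (n : ℤ) (p : 𝒮.X × 𝒯.X) :
    (𝒮.prodWith 𝒯).iter n p = (𝒮.iter n p.1, 𝒯.iter n p.2) := by
  show (𝒮.T.toEquiv.prodCongr 𝒯.T.toEquiv ^ n) p = _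
  rw [Equiv.Perm.prodCongr_zpow]
  rfl

lemma iter_prodWith_image_prod (n : ℤ) (A : Set 𝒮.X) (B : Set 𝒯.X) :
    (𝒮.prodWith 𝒯).iter n '' A ×ˢ B = (𝒮.iter n '' A) ×ˢ (𝒯.iter n '' B) := by
  have : (𝒮.prodWith 𝒯).iter n = Prod.map (𝒮.iter n) (𝒯.iter n) :=
    funext (iter_prodWith 𝒮 𝒯 n)
  rw [this]
  exact Set.prodMap_image_prod _ _ _ _

lemma iter_add_apply (m n : ℤ) (x : 𝒮.X) : 𝒮.iter (m + n) x = 𝒮.iter m (𝒮.iter n x) := by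
  simp only [iter, zpow_add, Equiv.Perm.mul_apply]

lemma measurable_iter (n : ℤ) : Measurable (𝒮.iter n) := by
  change Measurable ⇑(𝒮.T.toEquiv ^ n)
  cases n with
  | ofNat k =>
    rw [Int.ofNat_eq_natCast, zpow_natCast, Equiv.Perm.coe_pow]
    exact 𝒮.T.measurable.iterate k
  | negSucc k =>
    rw [zpow_negSucc, ← inv_pow, Equiv.Perm.coe_pow]
    exact 𝒮.T.symm.measurable.iterate (k + 1)

lemma measurableSet_iter_image (n : ℤ) {A : Set 𝒮.X} (hA : MeasurableSet A) :
    MeasurableSet (𝒮.iter n '' A) := by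
  have : 𝒮.iter n '' A = 𝒮.iter (-n) ⁻¹' A := by
    change ⇑(𝒮.T.toEquiv ^ n) '' A = ⇑(𝒮.T.toEquiv ^ (-n)) ⁻¹' A
    rw [Equiv.image_eq_preimage_symm, zpow_neg]
    rfl
  rw [this]
  exact 𝒮.measurable_iter (-n) hA

end MPSystem

open MPSystem

lemma mem_returnTimes_zero {𝒮 : MPSystem} {D : Set 𝒮.X} {n : ℤ} :
    n ∈ returnTimes 𝒮 D 0 ↔ 0 < 𝒮.μ (D ∩ 𝒮.iter n '' D) := by
  simp [returnTimes]

lemma returnTimes_zero_prodWith (𝒮 𝒯 : MPSystem) (D : Set 𝒮.X) (A : Set 𝒯.X) :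
    returnTimes (𝒮.prodWith 𝒯) (D ×ˢ A) 0 = returnTimes 𝒮 D 0 ∩ returnTimes 𝒯 A 0 := by
  have := 𝒮.prob
  have := 𝒯.prob
  ext n
  rw [Set.mem_inter_iff, mem_returnTimes_zero, mem_returnTimes_zero, mem_returnTimes_zero,
    iter_prodWith_image_prod, Set.prod_inter_prod, Measure.prod_prod, CanonicallyOrderedAdd.mul_pos]

lemma add_mem_returnTimes_of_mem_returnTimes_inter_iter_image {𝒯 : MPSystem} {A : Set 𝒯.X}
    {c : ℝ} {e n : ℤ} (hn : n ∈ returnTimes 𝒯 (A ∩ 𝒯.iter e '' A) c) :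
    n + e ∈ returnTimes 𝒯 A c := by
  refine lt_of_lt_of_le hn (measure_mono ?_)
  rintro _ ⟨⟨hxA, -⟩, _, ⟨-, a, haA, rfl⟩, rfl⟩
  exact ⟨hxA, a, haA, 𝒯.iter_add_apply n e a⟩

theorem measureExpanding_inter_sumset_returnTimes_deltaRecurrence_general
    (δ : ℝ) (S E : Set ℤ) (hS : MeasureExpanding S)
    (hE : IsDeltaRecurrenceSet δ E) (𝒮 : MPSystem) (D : Set 𝒮.X)
    (hD : MeasurableSet D) (hD0 : 0 < 𝒮.μ D) :
    IsDeltaRecurrenceSet δ (S ∩ Set.image2 (fun x y => x + y) E (returnTimes 𝒮 D 0)) := by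
  intro 𝒯 A hA hAδ
  obtain ⟨e, heE, he⟩ := hE 𝒯 A hA hAδ
  set A' := A ∩ 𝒯.iter e '' A
  have hA' : MeasurableSet A' := hA.inter (𝒯.measurableSet_iter_image e hA)
  have hDA' : 0 < (𝒮.prodWith 𝒯).μ (D ×ˢ A') := by
    have := 𝒮.prob
    have := 𝒯.prob
    rw [Measure.prod_prod]
    exact CanonicallyOrderedAdd.mul_pos.mpr ⟨hD0, he⟩
  obtain ⟨_, ⟨s, hs, rfl⟩, hret⟩ := hS (-e) (𝒮.prodWith 𝒯) (D ×ˢ A') (hD.prod hA') hDA'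
  obtain ⟨hretD, hretA'⟩ := returnTimes_zero_prodWith 𝒮 𝒯 D A' ▸ mem_returnTimes_zero.mpr hret
  refine ⟨s, ⟨hs, e, heE, s + -e, hretD, by ring⟩, ?_⟩
  have hretA := add_mem_returnTimes_of_mem_returnTimes_inter_iter_image hretA'
  simpa using mem_returnTimes_zero.mp hretA

/-- **Lemma (Aura).** If `δ > 0`, `S` is measure expanding, `E` is a set of `δ`-recurrence,
and `(X,μ,T)` is a measure preserving system with `μ(D) > 0`, then `S ∩ (E + R₀(T;D))`
is a set of `δ`-recurrence. -/
theorem measureExpanding_inter_sumset_returnTimes_deltaRecurrence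
    (δ : ℝ) (hδ : 0 < δ) (S E : Set ℤ) (hS : MeasureExpanding S)
    (hE : IsDeltaRecurrenceSet δ E) (𝒮 : MPSystem) (D : Set 𝒮.X)
    (hD : MeasurableSet D) (hD0 : 0 < 𝒮.μ D) :
    IsDeltaRecurrenceSet δ (S ∩ Set.image2 (fun x y => x + y) E (returnTimes 𝒮 D 0)) :=
  measureExpanding_inter_sumset_returnTimes_deltaRecurrence_general δ S E hS hE 𝒮 D hD hD0
end
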